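/- arXiv:1306.0386 — 2 statements merged into one kernel-verified Lean document; each statement's English description precedes it below -/
import Mathlib

section
/- Assume all rewards r(i,a,j) are nonnegative and let V_max = (max_π ‖r_π‖_∞)/(1−γ). Let (π_k) be a sequence of policies generated by Simplex-PI from any initial policy π_0. Then for every ε > 0 and every index k with k ≥ (n/(1−γ)) log(n V_max/ε) at which π_k is defined, the policy π_k is ε-optimal: ‖v_* − v_{π_k}‖_∞ ≤ ε. -/
open Matrix BigOperators

/-- A finite discounted MDP with `n ≥ 1` states and `m ≥ 2` actions:
transition probabilities `p i a j`, rewards `r i a j`, discount factor `γ ∈ (0,1)`. -/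
structure MDP (n m : ℕ) : Type where
  n_pos : 1 ≤ n
  m_ge_two : 2 ≤ m
  p : Fin n → Fin m → Fin n → ℝ
  r : Fin n → Fin m → Fin n → ℝ
  γ : ℝ
  p_nonneg : ∀ i a j, 0 ≤ p i a j
  p_sum : ∀ i a, ∑ j, p i a j = 1
  γ_pos : 0 < γ
  γ_lt_one : γ < 1

/-- A (stationary deterministic) policy. -/
abbrev MDP.Policy (n m : ℕ) : Type := Fin n → Fin m

namespace MDP

variable {n m : ℕ}

/-- The row-stochastic transition matrix `P_π` of a policy. -/
def P (M : MDP n m) (π : Policy n m) : Matrix (Fin n) (Fin n) ℝ :=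
  Matrix.of fun i j => M.p i (π i) j

/-- The expected reward vector `r_π` of a policy. -/
def rPol (M : MDP n m) (π : Policy n m) : Fin n → ℝ :=
  fun i => ∑ j, M.p i (π i) j * M.r i (π i) j

/-- The Bellman operator `T_π v = r_π + γ P_π v` of a policy. -/
def Tpol (M : MDP n m) (π : Policy n m) (v : Fin n → ℝ) : Fin n → ℝ :=
  fun i => M.rPol π i + M.γ * (M.P π *ᵥ v) i

/-- `IsValue M V` asserts that, for every policy `π`, `V π` is the value function `v_π`,
i.e. the (unique) solution of the Bellman equation `v_π = T_π v_π`. -/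
def IsValue (M : MDP n m) (V : Policy n m → Fin n → ℝ) : Prop :=
  ∀ π, V π = M.Tpol π (V π)

/-- The optimal Bellman operator `T v = max_π T_π v` (componentwise maximum). -/
noncomputable def T (M : MDP n m) (v : Fin n → ℝ) : Fin n → ℝ :=
  fun i => ⨆ π : Policy n m, M.Tpol π v i

/-- The optimal value function `v_*`, the componentwise maximum of `v_π` over policies. -/
noncomputable def vStar (M : MDP n m) (V : Policy n m → Fin n → ℝ) : Fin n → ℝ :=
  fun i => ⨆ π : Policy n m, V π i

/-- A policy is optimal when its value equals `v_*`. -/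
def IsOptimal (M : MDP n m) (V : Policy n m → Fin n → ℝ) (π : Policy n m) : Prop :=
  V π = M.vStar V

/-- `π'` is greedy with respect to `v_π`: `T_{π'} v_π = T v_π`.  One step of Howard's PI
from a non-optimal `π` moves to such a `π'`. -/
def Greedy (M : MDP n m) (V : Policy n m → Fin n → ℝ) (π π' : Policy n m) : Prop :=
  M.Tpol π' (V π) = M.T (V π)

/-- One step of Simplex-PI: `π'` agrees with `π` except at a single state `s` maximizing
the advantage `a_π(i) = (T v_π - v_π)(i)`, where `π'(s)` achieves `T v_π(s)`. -/
def SimplexStep (M : MDP n m) (V : Policy n m → Fin n → ℝ) (π π' : Policy n m) : Prop :=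
  ∃ s : Fin n, (∀ i, i ≠ s → π' i = π i) ∧
    (∀ i, M.T (V π) i - V π i ≤ M.T (V π) s - V π s) ∧
    M.Tpol π' (V π) s = M.T (V π) s

/-- The vector `x_π = (I - γ P_πᵀ)⁻¹ 1`. -/
noncomputable def xPol (M : MDP n m) (π : Policy n m) : Fin n → ℝ :=
  ((1 : Matrix (Fin n) (Fin n) ℝ) - M.γ • (M.P π)ᵀ)⁻¹ *ᵥ (fun _ => (1 : ℝ))

/-- `R` is a recurrent class of `π`: nonempty, closed under positive-probability
transitions of `P_π`, and every state of `R` is reachable from every other state of `R`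
along positive-probability transitions.  (For a deterministic MDP this is the notion of
a cycle of `π`.) -/
def IsRecClass (M : MDP n m) (π : Policy n m) (R : Set (Fin n)) : Prop :=
  R.Nonempty ∧ (∀ i ∈ R, ∀ j, 0 < M.P π i j → j ∈ R) ∧
    ∀ i ∈ R, ∀ j ∈ R, Relation.ReflTransGen (fun a b => 0 < M.P π a b) i j

/-- A state is recurrent for `π` if it belongs to some recurrent class of `π`. -/
def Recurrent (M : MDP n m) (π : Policy n m) (i : Fin n) : Prop :=
  ∃ R : Set (Fin n), M.IsRecClass π R ∧ i ∈ R

/-- A state is transient for `π` if it is not recurrent for `π`. -/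
def Transient (M : MDP n m) (π : Policy n m) (i : Fin n) : Prop :=
  ¬ M.Recurrent π i

/-- Assumption 1: `τ_t, τ_r ≥ 1` with `x_π(i) ≤ τ_t` for transient states and
`x_π(i) ≥ n / ((1-γ) τ_r)` for recurrent states, for every policy `π`. -/
def Ass1 (M : MDP n m) (τt τr : ℝ) : Prop :=
  1 ≤ τt ∧ 1 ≤ τr ∧
    (∀ π i, M.Transient π i → M.xPol π i ≤ τt) ∧
    (∀ π i, M.Recurrent π i → (n : ℝ) / ((1 - M.γ) * τr) ≤ M.xPol π i)

/-- Assumption 2: the state space is partitioned into a set of states transient for every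
policy and a set of states recurrent for every policy. -/
def Ass2 (M : MDP n m) : Prop :=
  ∃ 𝒯 ℛ : Set (Fin n), 𝒯 ∪ ℛ = Set.univ ∧ 𝒯 ∩ ℛ = ∅ ∧
    ∀ π : Policy n m, (∀ i ∈ 𝒯, M.Transient π i) ∧ (∀ i ∈ ℛ, M.Recurrent π i)

/-- The MDP is deterministic when every transition probability is 0 or 1. -/
def Deterministic (M : MDP n m) : Prop :=
  ∀ i a j, M.p i a j = 0 ∨ M.p i a j = 1

/-- `V_max = (max_π ‖r_π‖_∞) / (1 - γ)`. -/
noncomputable def Vmax (M : MDP n m) : ℝ :=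
  (⨆ π : Policy n m, ‖M.rPol π‖) / (1 - M.γ)

end MDP

/-! Let `S(π) = ∑ᵢ (v_* - v_π)(i)`. When Simplex-PI switches `π` at a state `s` of maximal
advantage `a`, the comparison principle for `T_π` (a supersolution of `v = T_π v` dominates
`v_π`) gives both `v_π + a • e_s ≤ v_{π'}`, so `S` drops by `a`, and `v_* ≤ v_π + a / (1 - γ)`,
so `S(π) ≤ n a / (1 - γ)`. Hence `S` contracts by `1 - (1 - γ) / n` per step. Nonnegative
rewards give `0 ≤ v_π ≤ V_max`, so `S(π₀) ≤ n V_max`, and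
`(1 - (1 - γ) / n) ^ k ≤ exp (-k (1 - γ) / n)` finishes, since `‖v_* - v_{π_k}‖ ≤ S(π_k)`. -/

namespace Matrix

variable {ι : Type*} [Fintype ι] [DecidableEq ι] {A : Matrix ι ι ℝ}

theorem mulVec_const_of_mem_rowStochastic (hA : A ∈ rowStochastic ℝ ι) (c : ℝ) :
    (A *ᵥ fun _ => c) = fun _ => c := by
  have hc : (fun _ : ι => c) = c • (1 : ι → ℝ) := by ext; simp
  rw [hc, mulVec_smul, one_vecMul_of_mem_rowStochastic hA]

theorem mulVec_mono_of_mem_rowStochastic (hA : A ∈ rowStochastic ℝ ι) {u v : ι → ℝ}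
    (h : u ≤ v) : A *ᵥ u ≤ A *ᵥ v := by
  intro i
  have := nonneg_mulVec_of_mem_rowStochastic hA (x := v - u) (fun j => sub_nonneg.2 (h j)) i
  rwa [mulVec_sub, Pi.sub_apply, sub_nonneg] at this

/-- At a minimal coordinate `i₀` the averaging `A *ᵥ d` is at least `d i₀`, so `d i₀ ≥ γ d i₀`. -/
theorem nonneg_of_smul_mulVec_le_of_mem_rowStochastic (hA : A ∈ rowStochastic ℝ ι) {γ : ℝ}
    (hγ0 : 0 ≤ γ) (hγ1 : γ < 1) {d : ι → ℝ} (hd : γ • (A *ᵥ d) ≤ d) : 0 ≤ d := by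
  intro i
  obtain ⟨i₀, -, hmin⟩ := Finset.univ.exists_min_image d ⟨i, Finset.mem_univ i⟩
  have hconst : (fun _ => d i₀) ≤ d := fun j => hmin j (Finset.mem_univ j)
  have havg : d i₀ ≤ (A *ᵥ d) i₀ := by
    simpa [mulVec_const_of_mem_rowStochastic hA] using
      mulVec_mono_of_mem_rowStochastic hA hconst i₀
  have hsub := hd i₀
  simp only [Pi.smul_apply, smul_eq_mul] at hsub
  show 0 ≤ d i
  nlinarith [hconst i, mul_le_mul_of_nonneg_left havg hγ0]

end Matrix

theorem one_sub_pow_mul_le_of_inv_mul_log_le {x C ε : ℝ} {k : ℕ} (hx0 : 0 < x) (hx1 : x ≤ 1)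
    (hε : 0 < ε) (hk : x⁻¹ * Real.log (C / ε) ≤ k) : (1 - x) ^ k * C ≤ ε := by
  rcases le_or_gt C 0 with hC | hC
  · exact (mul_nonpos_of_nonneg_of_nonpos (pow_nonneg (sub_nonneg.2 hx1) k) hC).trans hε.le
  have hlog : Real.log (C / ε) ≤ k * x := by rwa [inv_mul_le_iff₀ hx0, mul_comm] at hk
  calc (1 - x) ^ k * C ≤ Real.exp (-x) ^ k * C := by
        gcongr
        exact Real.one_sub_le_exp_neg x
    _ = Real.exp (-(k * x)) * C := by rw [← Real.exp_nat_mul]; ring_nf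
    _ ≤ Real.exp (-Real.log (C / ε)) * C := by gcongr
    _ = ε := by
      rw [Real.exp_neg, Real.exp_log (div_pos hC hε), inv_div, div_mul_cancel₀ _ hC.ne']

namespace MDP

variable {n m : ℕ} (M : MDP n m)

theorem P_mem_rowStochastic (π : Policy n m) : M.P π ∈ Matrix.rowStochastic ℝ (Fin n) :=
  Matrix.mem_rowStochastic_iff_sum.2 ⟨fun i j => M.p_nonneg i (π i) j, fun i => M.p_sum i (π i)⟩

theorem nonempty_policy (M : MDP n m) : Nonempty (Policy n m) :=
  ⟨fun _ => ⟨0, by have := M.m_ge_two; omega⟩⟩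

theorem Tpol_sub_Tpol (π : Policy n m) (u v : Fin n → ℝ) (i : Fin n) :
    M.Tpol π v i - M.Tpol π u i = M.γ * (M.P π *ᵥ (v - u)) i := by
  simp only [Tpol, mulVec_sub, Pi.sub_apply]
  ring

theorem Tpol_mono (π : Policy n m) {u v : Fin n → ℝ} (h : u ≤ v) : M.Tpol π u ≤ M.Tpol π v := by
  intro i
  have hγ := M.γ_pos.le
  simp only [Tpol]
  gcongr
  exact Matrix.mulVec_mono_of_mem_rowStochastic (M.P_mem_rowStochastic π) h i

theorem Tpol_add_const (π : Policy n m) (v : Fin n → ℝ) (c : ℝ) (i : Fin n) :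
    M.Tpol π (fun j => v j + c) i = M.Tpol π v i + M.γ * c := by
  show M.rPol π i + M.γ * (M.P π *ᵥ (v + fun _ => c)) i = _
  rw [mulVec_add, Matrix.mulVec_const_of_mem_rowStochastic (M.P_mem_rowStochastic π)]
  simp only [Tpol, Pi.add_apply]
  ring

theorem Tpol_congr_apply {π π' : Policy n m} (v : Fin n → ℝ) {i : Fin n} (h : π' i = π i) :
    M.Tpol π' v i = M.Tpol π v i := by
  simp only [Tpol, rPol, P, mulVec, dotProduct, of_apply, h]

theorem Tpol_apply_le_T (v : Fin n → ℝ) (π : Policy n m) (i : Fin n) :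
    M.Tpol π v i ≤ M.T v i :=
  le_ciSup (f := fun ρ => M.Tpol ρ v i) (Set.finite_range _).bddAbove π

theorem le_vStar (V : Policy n m → Fin n → ℝ) (π : Policy n m) (i : Fin n) :
    V π i ≤ M.vStar V i :=
  le_ciSup (f := fun ρ => V ρ i) (Set.finite_range _).bddAbove π

theorem vStar_apply_le (V : Policy n m → Fin n → ℝ) (i : Fin n) {c : ℝ} (h : ∀ π, V π i ≤ c) :
    M.vStar V i ≤ c :=
  haveI := M.nonempty_policy
  ciSup_le h

noncomputable def advantage (V : Policy n m → Fin n → ℝ) (π : Policy n m) : Fin n → ℝ :=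
  M.T (V π) - V π

noncomputable def totalGap (V : Policy n m → Fin n → ℝ) (π : Policy n m) : ℝ :=
  ∑ i, (M.vStar V i - V π i)

theorem norm_vStar_sub_le_totalGap (V : Policy n m → Fin n → ℝ) (π : Policy n m) :
    ‖M.vStar V - V π‖ ≤ M.totalGap V π := by
  have hnn : ∀ i, 0 ≤ M.vStar V i - V π i := fun i => sub_nonneg.2 (M.le_vStar V π i)
  refine (pi_norm_le_iff_of_nonneg (Finset.sum_nonneg fun i _ => hnn i)).2 fun i => ?_
  rw [Pi.sub_apply, Real.norm_of_nonneg (hnn i)]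
  exact Finset.single_le_sum (fun j _ => hnn j) (Finset.mem_univ i)

namespace IsValue

variable {M} {V : Policy n m → Fin n → ℝ}

theorem le_of_le_Tpol (hV : M.IsValue V) {π : Policy n m} {u : Fin n → ℝ}
    (h : u ≤ M.Tpol π u) : u ≤ V π := by
  refine sub_nonneg.1 <| Matrix.nonneg_of_smul_mulVec_le_of_mem_rowStochastic
    (M.P_mem_rowStochastic π) M.γ_pos.le M.γ_lt_one fun i => ?_
  have hdiff := M.Tpol_sub_Tpol π u (V π) i
  have hfix := congrFun (hV π) i
  simp only [Pi.smul_apply, smul_eq_mul, Pi.sub_apply]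
  linarith [h i]

theorem le_of_Tpol_le (hV : M.IsValue V) {π : Policy n m} {u : Fin n → ℝ}
    (h : M.Tpol π u ≤ u) : V π ≤ u := by
  refine sub_nonneg.1 <| Matrix.nonneg_of_smul_mulVec_le_of_mem_rowStochastic
    (M.P_mem_rowStochastic π) M.γ_pos.le M.γ_lt_one fun i => ?_
  have hdiff := M.Tpol_sub_Tpol π (V π) u i
  have hfix := congrFun (hV π) i
  simp only [Pi.smul_apply, smul_eq_mul, Pi.sub_apply]
  linarith [h i]

theorem nonneg (hV : M.IsValue V) (hr : ∀ i a j, 0 ≤ M.r i a j) (π : Policy n m) : 0 ≤ V π :=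
  hV.le_of_le_Tpol fun i => by
    have hrπ : 0 ≤ M.rPol π i :=
      Finset.sum_nonneg fun j _ => mul_nonneg (M.p_nonneg _ _ _) (hr _ _ _)
    simpa [Tpol] using hrπ

theorem le_Vmax (hV : M.IsValue V) (π : Policy n m) (i : Fin n) : V π i ≤ M.Vmax := by
  refine hV.le_of_Tpol_le (u := fun _ => M.Vmax) (fun j => ?_) i
  have hrπ : M.rPol π j ≤ (1 - M.γ) * M.Vmax := by
    rw [Vmax, mul_div_cancel₀ _ (sub_ne_zero.2 M.γ_lt_one.ne')]
    exact (Real.le_norm_self _).trans ((norm_le_pi_norm (M.rPol π) j).trans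
      (le_ciSup (f := fun ρ => ‖M.rPol ρ‖) (Set.finite_range _).bddAbove π))
  simp only [Tpol, Matrix.mulVec_const_of_mem_rowStochastic (M.P_mem_rowStochastic π)]
  linarith

theorem advantage_nonneg (hV : M.IsValue V) (π : Policy n m) : 0 ≤ M.advantage V π := fun i => by
  have hle := M.Tpol_apply_le_T (V π) π i
  have hfix := congrFun (hV π) i
  simp only [advantage, Pi.sub_apply, Pi.zero_apply]
  linarith

theorem vStar_le_add_of_advantage_le (hV : M.IsValue V) {π : Policy n m} {a : ℝ}
    (ha : ∀ i, M.advantage V π i ≤ a) (i : Fin n) : M.vStar V i ≤ V π i + a / (1 - M.γ) :=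
  M.vStar_apply_le V i fun ρ => hV.le_of_Tpol_le (u := fun j => V π j + a / (1 - M.γ))
    (fun j => by
      have hT := M.Tpol_apply_le_T (V π) ρ j
      have ha' := ha j
      have hgeom : M.γ * (a / (1 - M.γ)) + a = a / (1 - M.γ) := by
        field_simp [sub_ne_zero.2 M.γ_lt_one.ne']
        ring
      simp only [advantage, Pi.sub_apply] at ha'
      rw [M.Tpol_add_const]
      linarith) i

theorem add_single_advantage_le (hV : M.IsValue V) {π π' : Policy n m} {s : Fin n}
    (hagree : ∀ i, i ≠ s → π' i = π i) (hs : M.Tpol π' (V π) s = M.T (V π) s) :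
    V π + Pi.single s (M.advantage V π s) ≤ V π' := by
  refine hV.le_of_le_Tpol fun i => le_trans ?_ (M.Tpol_mono π'
    (le_add_of_nonneg_right (Pi.single_nonneg.2 (hV.advantage_nonneg π s))) i)
  by_cases hi : i = s
  · subst hi
    simp [hs, advantage]
  · rw [M.Tpol_congr_apply _ (hagree i hi), ← congrFun (hV π) i]
    simp [hi]

theorem totalGap_le (hV : M.IsValue V) (hr : ∀ i a j, 0 ≤ M.r i a j) (π : Policy n m) :
    M.totalGap V π ≤ n * M.Vmax :=
  calc M.totalGap V π ≤ ∑ _i : Fin n, M.Vmax := Finset.sum_le_sum fun i _ => by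
        have hstar := M.vStar_apply_le V i fun ρ => hV.le_Vmax ρ i
        have hπ : 0 ≤ V π i := hV.nonneg hr π i
        linarith
    _ = n * M.Vmax := by simp

theorem totalGap_le_of_simplexStep (hV : M.IsValue V) {π π' : Policy n m}
    (h : M.SimplexStep V π π') :
    M.totalGap V π' ≤ (1 - (1 - M.γ) / n) * M.totalGap V π := by
  obtain ⟨s, hagree, hmax, hs⟩ := h
  set a := M.advantage V π s
  have hγ : 0 < 1 - M.γ := sub_pos.2 M.γ_lt_one
  have hn : (0 : ℝ) < n := by exact_mod_cast M.n_pos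
  have hdecrease : M.totalGap V π' ≤ M.totalGap V π - a := by
    have hswitch := hV.add_single_advantage_le hagree hs
    calc M.totalGap V π' ≤ ∑ i, (M.vStar V i - (V π + Pi.single s a : Fin n → ℝ) i) :=
          Finset.sum_le_sum fun i _ => by linarith [hswitch i]
      _ = M.totalGap V π - a := by
        simp only [totalGap, Pi.add_apply, Finset.sum_sub_distrib, Finset.sum_add_distrib,
          Finset.sum_pi_single', Finset.mem_univ, if_true]
        ring
  have hbound : M.totalGap V π ≤ n * (a / (1 - M.γ)) :=
    calc M.totalGap V π ≤ ∑ _i : Fin n, a / (1 - M.γ) := Finset.sum_le_sum fun i _ => by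
          linarith [hV.vStar_le_add_of_advantage_le (a := a) hmax i]
      _ = n * (a / (1 - M.γ)) := by simp
  have hgain : (1 - M.γ) / n * M.totalGap V π ≤ a :=
    calc (1 - M.γ) / n * M.totalGap V π ≤ (1 - M.γ) / n * (n * (a / (1 - M.γ))) := by
          gcongr
      _ = a := by field_simp
  linarith

end IsValue

end MDP

/-- with nonnegative rewards, Simplex-PI produces an `ε`-optimal policy
after at most `(n/(1-γ)) log(n V_max/ε)` iterations. -/
theorem simplex_eps_optimal {n m : ℕ} (M : MDP n m)
    (hr : ∀ i a j, 0 ≤ M.r i a j)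
    (V : MDP.Policy n m → Fin n → ℝ) (hV : M.IsValue V)
    (π : ℕ → MDP.Policy n m) (K : ℕ)
    (hrun : ∀ k < K, ¬ M.IsOptimal V (π k) ∧ M.SimplexStep V (π k) (π (k + 1)))
    (ε : ℝ) (hε : 0 < ε) (k : ℕ) (hkK : k ≤ K)
    (hk : ((n : ℝ) / (1 - M.γ)) * Real.log ((n : ℝ) * M.Vmax / ε) ≤ (k : ℝ)) :
    ‖M.vStar V - V (π k)‖ ≤ ε := by
  have hn : (1 : ℝ) ≤ n := by exact_mod_cast M.n_pos
  have hx0 : 0 < (1 - M.γ) / n := div_pos (sub_pos.2 M.γ_lt_one) (by linarith)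
  have hx1 : (1 - M.γ) / n ≤ 1 := div_le_one_of_le₀ (by linarith [M.γ_pos]) (by linarith)
  calc ‖M.vStar V - V (π k)‖ ≤ M.totalGap V (π k) := M.norm_vStar_sub_le_totalGap V (π k)
    _ ≤ (1 - (1 - M.γ) / n) ^ k * M.totalGap V (π 0) :=
        le_geom (u := fun j => M.totalGap V (π j)) (sub_nonneg.2 hx1) k fun j hj =>
          hV.totalGap_le_of_simplexStep (hrun j (by omega)).2
    _ ≤ (1 - (1 - M.γ) / n) ^ k * (n * M.Vmax) :=
        mul_le_mul_of_nonneg_left (hV.totalGap_le hr _) (pow_nonneg (sub_nonneg.2 hx1) k)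
    _ ≤ ε := one_sub_pow_mul_le_of_inv_mul_log_le hx0 hx1 hε (by rwa [inv_div])
end

section
/- Suppose the MDP satisfies Assumption 1 with constants τ_t and τ_r. If Simplex-PI moves in one step from a non-optimal policy π to a policy π', and π' has a recurrent class that is not a recurrent class of π, then 1ᵀ(v_* − v_{π'}) ≤ (1 − 1/τ_r) · 1ᵀ(v_* − v_π). -/
/-!
Since `π'` differs from `π` only at the switched state `s`, its advantage over `v_π` is `a • e_s`,
where `a` is the largest advantage of `π`. The difference `d = v_π' - v_π` solves
`d = a • e_s + γ P_π' d`, and pairing this with `x_π' = 1 + γ P_π'ᵀ x_π'` gives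
`1ᵀ d = x_π'(s) a`. On the other hand every `v_σ - v_π` solves the same kind of equation with a
right-hand side at most `a`, so `v_* - v_π ≤ a / (1 - γ)` and `1ᵀ(v_* - v_π) ≤ n a / (1 - γ)`.
A recurrent class of `π'` avoiding `s` would be a recurrent class of `π` as well, so `s` is
recurrent for `π'`, and Assumption 1 yields `x_π'(s) ≥ n / ((1 - γ) τ_r)`: the gain `1ᵀ d` is
at least `1ᵀ(v_* - v_π) / τ_r`.
-/

open Matrix BigOperators

namespace MDP

variable {n m : ℕ} (M : MDP n m)

theorem P_nonneg (π : Policy n m) (i j : Fin n) : 0 ≤ M.P π i j :=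
  M.p_nonneg _ _ _

theorem sum_P (π : Policy n m) (i : Fin n) : ∑ j, M.P π i j = 1 :=
  M.p_sum i (π i)

theorem mulVec_P_le {π : Policy n m} {y : Fin n → ℝ} {c : ℝ} (hy : ∀ j, y j ≤ c) (i : Fin n) :
    (M.P π *ᵥ y) i ≤ c :=
  calc (M.P π *ᵥ y) i = ∑ j, M.P π i j * y j := rfl
    _ ≤ ∑ j, M.P π i j * c :=
        Finset.sum_le_sum fun j _ => mul_le_mul_of_nonneg_left (hy j) (M.P_nonneg π i j)
    _ = c := by rw [← Finset.sum_mul, M.sum_P, one_mul]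

/-- Strict column diagonal dominance, since `γ < 1` and the rows of `P_π` sum to `1`. -/
theorem det_one_sub_smul_transpose_P_ne_zero (π : Policy n m) :
    ((1 : Matrix (Fin n) (Fin n) ℝ) - M.γ • (M.P π)ᵀ).det ≠ 0 := by
  classical
  refine det_ne_zero_of_sum_col_lt_diag fun k => ?_
  have hoff : ∑ i ∈ Finset.univ.erase k, M.P π k i = 1 - M.P π k k := by
    rw [Finset.sum_erase_eq_sub (Finset.mem_univ k), M.sum_P]
  have hdiag : M.γ * M.P π k k < 1 := by
    have : M.P π k k ≤ 1 := M.sum_P π k ▸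
      Finset.single_le_sum (fun j _ => M.P_nonneg π k j) (Finset.mem_univ k)
    nlinarith [M.γ_pos, M.γ_lt_one]
  calc ∑ i ∈ Finset.univ.erase k, ‖((1 : Matrix (Fin n) (Fin n) ℝ) - M.γ • (M.P π)ᵀ) i k‖
      = M.γ * (1 - M.P π k k) := by
        rw [← hoff, Finset.mul_sum]
        refine Finset.sum_congr rfl fun i hi => ?_
        rw [Matrix.sub_apply, Matrix.one_apply_ne (Finset.ne_of_mem_erase hi)]
        simp [abs_of_nonneg (M.P_nonneg π k i), M.γ_pos.le]
    _ < 1 - M.γ * M.P π k k := by nlinarith [M.γ_lt_one, M.P_nonneg π k k]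
    _ = ‖((1 : Matrix (Fin n) (Fin n) ℝ) - M.γ • (M.P π)ᵀ) k k‖ := by
        simp [abs_of_pos (sub_pos.mpr hdiag)]

theorem one_sub_smul_transpose_P_mulVec_xPol (π : Policy n m) :
    ((1 : Matrix (Fin n) (Fin n) ℝ) - M.γ • (M.P π)ᵀ) *ᵥ M.xPol π = fun _ => 1 := by
  rw [xPol, mulVec_mulVec, mul_nonsing_inv _ (M.det_one_sub_smul_transpose_P_ne_zero π).isUnit,
    one_mulVec]

theorem sum_eq_xPol_dotProduct {π : Policy n m} {d b : Fin n → ℝ}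
    (hd : d = b + M.γ • (M.P π *ᵥ d)) : ∑ i, d i = M.xPol π ⬝ᵥ b := by
  have hb : ((1 : Matrix (Fin n) (Fin n) ℝ) - M.γ • M.P π) *ᵥ d = b := by
    rw [sub_mulVec, one_mulVec, smul_mulVec, sub_eq_iff_eq_add, ← hd]
  calc ∑ i, d i = (fun _ => (1 : ℝ)) ⬝ᵥ d := by simp [dotProduct]
    _ = M.xPol π ⬝ᵥ b := by
      rw [← M.one_sub_smul_transpose_P_mulVec_xPol, ← vecMul_transpose, ← dotProduct_mulVec,
        transpose_sub, transpose_one, transpose_smul, transpose_transpose, hb]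

theorem le_div_one_sub_of_eq {π : Policy n m} {d b : Fin n → ℝ} {c : ℝ}
    (hd : d = b + M.γ • (M.P π *ᵥ d)) (hb : ∀ i, b i ≤ c) (i : Fin n) :
    d i ≤ c / (1 - M.γ) := by
  obtain ⟨k, -, hk⟩ := Finset.univ.exists_max_image d ⟨i, Finset.mem_univ i⟩
  have hmax : ∀ j, d j ≤ d k := fun j => hk j (Finset.mem_univ j)
  have hdk : d k ≤ c + M.γ * d k := by
    conv_lhs => rw [hd]
    exact add_le_add (hb k)
      (mul_le_mul_of_nonneg_left (M.mulVec_P_le hmax k) M.γ_pos.le)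
  rw [le_div_iff₀ (sub_pos.mpr M.γ_lt_one)]
  nlinarith [hmax i, M.γ_lt_one]

theorem Tpol_le_T (π : Policy n m) (v : Fin n → ℝ) (i : Fin n) : M.Tpol π v i ≤ M.T v i :=
  le_ciSup (Set.finite_range fun σ => M.Tpol σ v i).bddAbove π

theorem Tpol_congr {π π' : Policy n m} {i : Fin n} (h : π' i = π i) (v : Fin n → ℝ) :
    M.Tpol π' v i = M.Tpol π v i := by
  simp only [Tpol, rPol, P, mulVec, dotProduct, of_apply, h]

section Value

variable {M} {V : Policy n m → Fin n → ℝ} (hV : M.IsValue V)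
include hV

theorem value_le_T (π : Policy n m) (i : Fin n) : V π i ≤ M.T (V π) i :=
  (congrFun (hV π) i).trans_le (M.Tpol_le_T π (V π) i)

theorem value_sub_value (π σ : Policy n m) :
    V σ - V π = (M.Tpol σ (V π) - V π) + M.γ • (M.P σ *ᵥ (V σ - V π)) := by
  ext i
  have hσ := congrFun (hV σ) i
  simp only [Tpol, mulVec_sub, Pi.add_apply, Pi.sub_apply, Pi.smul_apply, smul_eq_mul] at hσ ⊢
  linarith

theorem vStar_sub_le {π : Policy n m} {c : ℝ} (hc : ∀ i, M.T (V π) i - V π i ≤ c)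
    (i : Fin n) : M.vStar V i - V π i ≤ c / (1 - M.γ) := by
  have : Nonempty (Policy n m) := ⟨fun _ => ⟨0, by linarith [M.m_ge_two]⟩⟩
  refine sub_le_iff_le_add.mpr (ciSup_le fun σ => sub_le_iff_le_add.mp ?_)
  refine M.le_div_one_sub_of_eq (value_sub_value hV π σ) (fun j => ?_) i
  exact (sub_le_sub_right (M.Tpol_le_T σ (V π) j) _).trans (hc j)

end Value

variable {M} in
theorem IsRecClass.of_agree {π π' : Policy n m} {R : Set (Fin n)} (hR : M.IsRecClass π' R)
    (h : ∀ i ∈ R, π' i = π i) : M.IsRecClass π R := by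
  obtain ⟨hne, hclosed, hreach⟩ := hR
  have hP : ∀ i ∈ R, ∀ j, M.P π' i j = M.P π i j := fun i hi j => by simp [P, h i hi]
  refine ⟨hne, fun i hi j hj => hclosed i hi j (hP i hi j ▸ hj), fun i hi j hj => ?_⟩
  induction hreach i hi j hj using Relation.ReflTransGen.head_induction_on with
  | refl => exact .refl
  | head hstep _ ih =>
    exact .head (hP _ hi _ ▸ hstep) (ih (hclosed _ hi _ hstep))

end MDP

theorem simplex_recurrent_progress_general {n m : ℕ} (M : MDP n m)
    (τt τr : ℝ) (h1 : M.Ass1 τt τr)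
    (V : MDP.Policy n m → Fin n → ℝ) (hV : M.IsValue V)
    (π π' : MDP.Policy n m)
    (hstep : M.SimplexStep V π π')
    (hnew : ∃ R : Set (Fin n), M.IsRecClass π' R ∧ ¬ M.IsRecClass π R) :
    ∑ i, (M.vStar V i - V π' i) ≤ (1 - 1 / τr) * ∑ i, (M.vStar V i - V π i) := by
  obtain ⟨s, hagree, hmax, hTs⟩ := hstep
  obtain ⟨R, hR', hR⟩ := hnew
  set a := M.T (V π) s - V π s
  have hadv : M.Tpol π' (V π) - V π = Pi.single s a := by
    ext i
    rcases eq_or_ne i s with rfl | hi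
    · simp [a, hTs]
    · simp [hi, M.Tpol_congr (hagree i hi), ← congrFun (hV π) i]
  have hgain : ∑ i, (V π' - V π) i = M.xPol π' s * a := by
    rw [M.sum_eq_xPol_dotProduct (MDP.value_sub_value hV π π'), hadv, dotProduct_single]
  have hgap : ∀ i, M.vStar V i - V π i ≤ a / (1 - M.γ) := MDP.vStar_sub_le hV hmax
  have hs : s ∈ R := by_contra fun hs =>
    hR (hR'.of_agree fun i hi => hagree i (ne_of_mem_of_not_mem hi hs))
  have hx : n / ((1 - M.γ) * τr) ≤ M.xPol π' s := h1.2.2.2 π' s ⟨R, hR', hs⟩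
  have ha : 0 ≤ a := sub_nonneg.mpr (MDP.value_le_T hV π s)
  have hτr : 0 < τr := one_pos.trans_le h1.2.1
  set S := ∑ i, (M.vStar V i - V π i)
  have hS : S / τr ≤ M.xPol π' s * a :=
    calc S / τr ≤ (∑ _i : Fin n, a / (1 - M.γ)) / τr :=
          div_le_div_of_nonneg_right (Finset.sum_le_sum fun i _ => hgap i) hτr.le
      _ = n / ((1 - M.γ) * τr) * a := by
          have hγ : 0 < 1 - M.γ := sub_pos.mpr M.γ_lt_one
          simp only [Finset.sum_const, Finset.card_univ, Fintype.card_fin, nsmul_eq_mul]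
          field_simp
      _ ≤ M.xPol π' s * a := mul_le_mul_of_nonneg_right hx ha
  calc ∑ i, (M.vStar V i - V π' i) = S - ∑ i, (V π' - V π) i := by
        rw [← Finset.sum_sub_distrib]; simp
    _ ≤ (1 - 1 / τr) * S := by rw [hgain, sub_mul, one_mul, one_div_mul_eq_div]; linarith

/-- under Assumption 1, a Simplex-PI step creating a new recurrent class
contracts `1ᵀ(v_* - v_π)` with coefficient `1 - 1/τ_r`. -/
theorem simplex_recurrent_progress {n m : ℕ} (M : MDP n m)
    (τt τr : ℝ) (h1 : M.Ass1 τt τr)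
    (V : MDP.Policy n m → Fin n → ℝ) (hV : M.IsValue V)
    (π π' : MDP.Policy n m) (hπ : ¬ M.IsOptimal V π)
    (hstep : M.SimplexStep V π π')
    (hnew : ∃ R : Set (Fin n), M.IsRecClass π' R ∧ ¬ M.IsRecClass π R) :
    ∑ i, (M.vStar V i - V π' i) ≤ (1 - 1 / τr) * ∑ i, (M.vStar V i - V π i) :=
  simplex_recurrent_progress_general M τt τr h1 V hV π π' hstep hnew
end
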